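/- Outer composition with a linear map: let X ⊆ ℝⁿ be a smooth manifold around x̄, S₀ : ℝⁿ ⇉ ℝᵖ osc relative to X with S₀|_X graph-convex, F : ℝᵖ → ℝᵐ linear, S = F∘S₀, ū ∈ S|_X(x̄), and suppose (x,u) ↦ S₀|_X(x) ∩ F⁻¹(u) is locally bounded at (x̄,ū). Then for w̄ ∈ S₀(x̄) ∩ F⁻¹(ū): D*_X S(x̄|ū)(y) = D*_X S₀(x̄|w̄)(F* y) for all y ∈ ℝᵐ, where F* is the adjoint of F. -/

import Mathlib

open Filter Topology Set Metric
open scoped ENNReal NNReal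

noncomputable section

/-- Euclidean space ℝⁿ. -/
abbrev Euc (n : ℕ) := EuclideanSpace ℝ (Fin n)

variable {E F : Type*}

/-- Set-valued metric (nearest-point) projection onto `C`. -/
def projSet [NormedAddCommGroup E] (C : Set E) (v : E) : Set E :=
  {y | y ∈ C ∧ ‖v - y‖ = Metric.infDist v C}

/-- Bouligand (contingent) tangent cone to `C` at `x`. -/
def tanCone [NormedAddCommGroup E] [NormedSpace ℝ E] (C : Set E) (x : E) : Set E :=
  {w | ∃ t : ℕ → ℝ, ∃ w' : ℕ → E, (∀ k, 0 < t k) ∧ Tendsto t atTop (𝓝 0) ∧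
      Tendsto w' atTop (𝓝 w) ∧ ∀ k, x + t k • w' k ∈ C}

section Normals
variable [NormedAddCommGroup E] [InnerProductSpace ℝ E]
  [NormedAddCommGroup F] [InnerProductSpace ℝ F]

/-- Fréchet (regular) normal cone to `C` at `x`. -/
def fNormal (C : Set E) (x : E) : Set E :=
  {v | x ∈ C ∧ ∀ ε > 0, ∃ δ > 0, ∀ y ∈ C, ‖y - x‖ < δ → (inner ℝ v (y - x) : ℝ) ≤ ε * ‖y - x‖}

/-- Limiting (Mordukhovich) normal cone to `C` at `x`. -/
def lNormal (C : Set E) (x : E) : Set E :=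
  {v | x ∈ C ∧ ∃ xk vk : ℕ → E, (∀ k, vk k ∈ fNormal C (xk k)) ∧
      Tendsto xk atTop (𝓝 x) ∧ Tendsto vk atTop (𝓝 v)}

/-- Fréchet normal cone to a subset of a product space (componentwise inner product). -/
def fNormal2 (D : Set (E × F)) (z : E × F) : Set (E × F) :=
  {v | z ∈ D ∧ ∀ ε > 0, ∃ δ > 0, ∀ z' ∈ D, ‖z' - z‖ < δ →
      (inner ℝ v.1 (z'.1 - z.1) : ℝ) + (inner ℝ v.2 (z'.2 - z.2) : ℝ) ≤ ε * ‖z' - z‖}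

/-- Limiting normal cone to a subset of a product space. -/
def lNormal2 (D : Set (E × F)) (z : E × F) : Set (E × F) :=
  {v | z ∈ D ∧ ∃ zk vk : ℕ → E × F, (∀ k, vk k ∈ fNormal2 D (zk k)) ∧
      Tendsto zk atTop (𝓝 z) ∧ Tendsto vk atTop (𝓝 v)}

/-- Graph of a set-valued mapping. -/
def gph (S : E → Set F) : Set (E × F) := {z | z.2 ∈ S z.1}

/-- Restriction of a set-valued mapping to a set `X`. -/
def restr (S : E → Set F) (X : Set E) : E → Set F := fun x => {u | u ∈ S x ∧ x ∈ X}

/-- Fréchet coderivative of `S` at `x` for `u`. -/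
def fCoderiv (S : E → Set F) (x : E) (u : F) (u' : F) : Set E :=
  {x' | (x', -u') ∈ fNormal2 (gph S) (x, u)}

/-- Limiting coderivative of `S` at `x` for `u`. -/
def coderiv (S : E → Set F) (x : E) (u : F) (u' : F) : Set E :=
  {x' | (x', -u') ∈ lNormal2 (gph S) (x, u)}

/-- Projection of the limiting normal cone of `gph (restr S X)` at `z`
onto `T_X(z.1) × F` (projection acting on the first component only). -/
def projNormal (S : E → Set F) (X : Set E) (z : E × F) : Set (E × F) :=
  {q | ∃ v : E, (v, q.2) ∈ lNormal2 (gph (restr S X)) z ∧ q.1 ∈ projSet (tanCone X z.1) v}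

/-- Projectional coderivative of `S` relative to `X` at `x` for `u`:
the outer limit of the projected normal cones along `gph (restr S X)`. -/
def projCoderiv (S : E → Set F) (X : Set E) (x : E) (u : F) (u' : F) : Set E :=
  {t | ∃ zk qk : ℕ → E × F,
      (∀ k, zk k ∈ gph (restr S X)) ∧ (∀ k, qk k ∈ projNormal S X (zk k)) ∧
      Tendsto zk atTop (𝓝 (x, u)) ∧ Tendsto qk atTop (𝓝 (t, -u'))}

/-- `C` is locally closed at `z`. -/
def LocallyClosedAt (C : Set E) (z : E) : Prop :=
  ∃ ε > 0, IsClosed (C ∩ Metric.closedBall z ε)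

/-- `S` has the Lipschitz-like (Aubin) property relative to `X` at `xb` for `ub`
with constant `κ`. -/
def LipschitzLikeRel (S : E → Set F) (X : Set E) (xb : E) (ub : F) (κ : ℝ) : Prop :=
  LocallyClosedAt (gph S) (xb, ub) ∧
  ∃ V ∈ 𝓝 xb, ∃ W ∈ 𝓝 ub, ∀ x ∈ X ∩ V, ∀ x' ∈ X ∩ V, ∀ u ∈ S x' ∩ W,
    ∃ u'' ∈ S x, ‖u - u''‖ ≤ κ * ‖x' - x‖

end Normals

/-- `X ⊆ ℝⁿ` is a smooth manifold around `x₀`, witnessed by the chart data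
`(O, Φ, Φ')`: `O` open containing `x₀`, `X ∩ O = Φ⁻¹(0)`, `Φ` is `C¹` on `O`
with derivative `Φ'`, and `Φ'(x₀)` is surjective (full rank). -/
def IsSmoothMfdChart {n c : ℕ} (X : Set (Euc n)) (x₀ : Euc n) (O : Set (Euc n))
    (Φ : Euc n → Euc c) (Φ' : Euc n → (Euc n →L[ℝ] Euc c)) : Prop :=
  IsOpen O ∧ x₀ ∈ O ∧ X ∩ O = {x | x ∈ O ∧ Φ x = 0} ∧
  (∀ x ∈ O, HasFDerivAt Φ (Φ' x) x) ∧ ContinuousOn Φ' O ∧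
  Function.Surjective (Φ' x₀)

/-- `X ⊆ ℝⁿ` is a smooth manifold around `x₀`. -/
def SmoothManifoldAround {n : ℕ} (X : Set (Euc n)) (x₀ : Euc n) : Prop :=
  ∃ (c : ℕ) (O : Set (Euc n)) (Φ : Euc n → Euc c) (Φ' : Euc n → (Euc n →L[ℝ] Euc c)),
    IsSmoothMfdChart X x₀ O Φ Φ'

/-- Composition of set-valued mappings: `(S₂ ∘ S₁)(x) = ⋃_{w ∈ S₁(x)} S₂(w)`. -/
def scomp {E P F : Type*} (S₂ : P → Set F) (S₁ : E → Set P) : E → Set F :=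
  fun x => {u | ∃ w ∈ S₁ x, u ∈ S₂ w}

/-- Outer semicontinuity of a set-valued mapping relative to a set `X`. -/
def OscRel {E P : Type*} [TopologicalSpace E] [TopologicalSpace P]
    (S : E → Set P) (X : Set E) : Prop :=
  ∀ x ∈ X, ∀ (xk : ℕ → E) (wk : ℕ → P) (w : P),
    (∀ k, xk k ∈ X) → (∀ k, wk k ∈ S (xk k)) →
    Filter.Tendsto xk Filter.atTop (nhds x) → Filter.Tendsto wk Filter.atTop (nhds w) →
    w ∈ S x

/-! On a convex graph, Fréchet and limiting normals coincide with the normals of convex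
analysis. Near `xb` the tangent cone of the manifold `X` is the subspace `ker Φ'(x)`, and for
`z, z'` in the convex graph `gph S|_X` the direction `z'.1 - z.1` is tangent, so projecting a
normal onto the tangent subspace does not change its pairing with these directions. Hence
`D*_X S(xb|ub)(y)` is the set of tangent vectors `t` at `xb` for which `(t, -y)` is a convex
normal to `gph S|_X` at `(xb, ub)`. For `S = L ∘ S₀` that graph is the image of `gph S₀|_X`
under `id × L`, which preserves convexity and turns `-y` into `-L* y` in the normal inequality. -/

section ConvexNormal

variable [NormedAddCommGroup E] [InnerProductSpace ℝ E]
  [NormedAddCommGroup F] [InnerProductSpace ℝ F]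

def convexNormal (D : Set (E × F)) (z : E × F) : Set (E × F) :=
  {v | ∀ z' ∈ D, inner ℝ v.1 (z'.1 - z.1) + inner ℝ v.2 (z'.2 - z.2) ≤ 0}

variable {D : Set (E × F)} {z v : E × F}

theorem convexNormal_subset_fNormal2 (hz : z ∈ D) : convexNormal D z ⊆ fNormal2 D z :=
  fun _ hv => ⟨hz, fun _ _ => ⟨1, one_pos, fun z' hz' _ => (hv z' hz').trans (by positivity)⟩⟩

theorem convexNormal_subset_lNormal2 (hz : z ∈ D) : convexNormal D z ⊆ lNormal2 D z :=
  fun v hv => ⟨hz, fun _ => z, fun _ => v, fun _ => convexNormal_subset_fNormal2 hz hv,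
    tendsto_const_nhds, tendsto_const_nhds⟩

theorem mem_convexNormal_of_tendsto {zk vk : ℕ → E × F} (hzk : Tendsto zk atTop (𝓝 z))
    (hvk : Tendsto vk atTop (𝓝 v)) (h : ∀ᶠ k in atTop, vk k ∈ convexNormal D (zk k)) :
    v ∈ convexNormal D z := by
  intro z' hz'
  have hcont : Continuous fun p : (E × F) × (E × F) =>
      inner ℝ p.2.1 (z'.1 - p.1.1) + inner ℝ p.2.2 (z'.2 - p.1.2) := by fun_prop
  exact le_of_tendsto ((hcont.tendsto (z, v)).comp (hzk.prodMk_nhds hvk))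
    (h.mono fun k hk => hk z' hz')

/-- On a convex set the Fréchet inequality, tested along the segment `[z, z']` and scaled back,
holds globally. -/
theorem fNormal2_subset_convexNormal (hD : Convex ℝ D) : fNormal2 D z ⊆ convexNormal D z := by
  rintro v ⟨hz, hv⟩ z' hz'
  set P := inner ℝ v.1 (z'.1 - z.1) + inner ℝ v.2 (z'.2 - z.2)
  have hP : ∀ ε > 0, P ≤ ε * ‖z' - z‖ := by
    intro ε hε
    obtain ⟨δ, hδ, hvδ⟩ := hv ε hε
    have hsmall : ∀ᶠ τ in 𝓝[>] (0 : ℝ), τ ≤ 1 ∧ τ * ‖z' - z‖ < δ := by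
      have h1 : ∀ᶠ τ in 𝓝 (0 : ℝ), τ ≤ 1 := eventually_le_nhds one_pos
      have h2 : ∀ᶠ τ in 𝓝 (0 : ℝ), τ * ‖z' - z‖ < δ :=
        (continuous_id.mul continuous_const).tendsto' 0 0 (by simp) |>.eventually_lt_const hδ
      exact nhdsWithin_le_nhds (h1.and h2)
    obtain ⟨τ, ⟨hτ1, hτδ⟩, hτ0 : 0 < τ⟩ := (hsmall.and self_mem_nhdsWithin).exists
    have hnorm : ‖z + τ • (z' - z) - z‖ = τ * ‖z' - z‖ := by
      rw [add_sub_cancel_left, norm_smul, Real.norm_of_nonneg hτ0.le]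
    have h := hvδ _ (hD.add_smul_sub_mem hz hz' ⟨hτ0.le, hτ1⟩) (hnorm ▸ hτδ)
    simp only [Prod.fst_add, Prod.snd_add, Prod.smul_fst, Prod.smul_snd, Prod.fst_sub,
      Prod.snd_sub, add_sub_cancel_left, real_inner_smul_right, norm_smul,
      Real.norm_of_nonneg hτ0.le] at h
    exact le_of_mul_le_mul_left (by linarith) hτ0
  refine le_of_forall_pos_le_add fun ε hε => ?_
  have hC : 0 ≤ ‖z' - z‖ := norm_nonneg _
  calc P ≤ ε / (‖z' - z‖ + 1) * ‖z' - z‖ := hP _ (by positivity)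
    _ ≤ 0 + ε := by
      rw [zero_add, div_mul_eq_mul_div, div_le_iff₀ (by positivity)]
      nlinarith

theorem lNormal2_subset_convexNormal (hD : Convex ℝ D) : lNormal2 D z ⊆ convexNormal D z :=
  fun _ ⟨_, _, _, hfk, hzk, hvk⟩ => mem_convexNormal_of_tendsto hzk hvk
    (.of_forall fun k => fNormal2_subset_convexNormal hD (hfk k))

end ConvexNormal

section TangentCone

variable [NormedAddCommGroup E] [NormedSpace ℝ E] {C : Set E} {x w : E}

theorem mem_tanCone_of_eventually {t : ℕ → ℝ} {w' : ℕ → E} (ht0 : ∀ k, 0 < t k)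
    (ht : Tendsto t atTop (𝓝 0)) (hw' : Tendsto w' atTop (𝓝 w))
    (hC : ∀ᶠ k in atTop, x + t k • w' k ∈ C) : w ∈ tanCone C x := by
  obtain ⟨N, hN⟩ := eventually_atTop.mp hC
  exact ⟨fun k => t (k + N), fun k => w' (k + N), fun k => ht0 _,
    ht.comp (tendsto_add_atTop_nat N), hw'.comp (tendsto_add_atTop_nat N),
    fun k => hN _ (Nat.le_add_left N k)⟩

theorem mem_tanCone_of_hasDerivWithinAt {γ : ℝ → E} (hγ : HasDerivWithinAt γ w (Ioi 0) 0)
    (hC : ∀ᶠ τ in 𝓝[>] 0, γ τ ∈ C) : w ∈ tanCone C (γ 0) := by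
  have ht : Tendsto (fun k : ℕ => ((k : ℝ) + 1)⁻¹) atTop (𝓝[>] 0) :=
    tendsto_nhdsWithin_iff.mpr ⟨tendsto_inv_atTop_zero.comp
      (tendsto_natCast_atTop_atTop.atTop_add tendsto_const_nhds),
      .of_forall fun k => mem_Ioi.mpr (by positivity)⟩
  refine mem_tanCone_of_eventually (t := fun k : ℕ => ((k : ℝ) + 1)⁻¹)
    (w' := fun k => slope γ 0 ((k : ℝ) + 1)⁻¹)
    (fun k => by positivity) (tendsto_nhdsWithin_iff.mp ht).1
    ((hasDerivWithinAt_iff_tendsto_slope' (lt_irrefl 0)).mp hγ |>.comp ht) ?_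
  filter_upwards [ht.eventually hC] with k hk
  rwa [slope_def_module, sub_zero, smul_smul, mul_inv_cancel₀ (by positivity), one_smul,
    add_sub_cancel]

theorem sub_mem_tanCone_of_forall_add_smul_mem {y : E}
    (h : ∀ τ ∈ Icc (0 : ℝ) 1, x + τ • (y - x) ∈ C) : y - x ∈ tanCone C x := by
  have hγ : HasDerivWithinAt (fun τ : ℝ => x + τ • (y - x)) (y - x) (Ioi 0) 0 :=
    ((hasDerivAt_id 0).smul_const (y - x)).const_add x |>.hasDerivWithinAt |>.congr_deriv
      (one_smul ℝ _)
  have hC : ∀ᶠ τ in 𝓝[>] (0 : ℝ), x + τ • (y - x) ∈ C := by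
    filter_upwards [Ioc_mem_nhdsGT zero_lt_one] with τ hτ using h τ (Ioc_subset_Icc_self hτ)
  simpa using mem_tanCone_of_hasDerivWithinAt hγ hC

end TangentCone

section Kernel

variable [NormedAddCommGroup E] [NormedSpace ℝ E] [NormedAddCommGroup F] [NormedSpace ℝ F]

/-- Composing with a fixed right inverse `B` of `T₀` turns surjectivity near `T₀` into
invertibility of `T ∘L B` near `1`. -/
theorem ContinuousLinearMap.isOpen_setOf_surjective [FiniteDimensional ℝ F] :
    IsOpen {T : E →L[ℝ] F | Function.Surjective T} := by
  have := FiniteDimensional.complete ℝ F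
  refine isOpen_iff_mem_nhds.mpr fun T₀ hT₀ => ?_
  obtain ⟨B, hB⟩ := HasRightInverse.of_surjective_of_finiteDimensional hT₀
  have hcont : Continuous fun T : E →L[ℝ] F => T ∘L B := by fun_prop
  have hunit : IsUnit (T₀ ∘L B) := by
    rw [show T₀ ∘L B = 1 from ContinuousLinearMap.ext hB]
    exact isUnit_one
  filter_upwards [hcont.continuousAt.preimage_mem_nhds (Units.isOpen.mem_nhds hunit)] with T hT
  exact .of_comp (isUnit_iff_bijective.mp hT).surjective

variable {C : Set E} {x : E} {Φ : E → F} {A : E →L[ℝ] F}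

theorem tanCone_subset_ker (hΦ : HasFDerivAt Φ A x) (hC : ∀ᶠ y in 𝓝 x, y ∈ C → Φ y = Φ x) :
    tanCone C x ⊆ A.ker := by
  rintro w ⟨t, w', ht0, ht, hw', hmem⟩
  have hd : Tendsto (fun k => t k • w' k) atTop (𝓝 0) := by simpa using ht.smul hw'
  have hlim := hΦ.hasFDerivWithinAt.lim (s := univ) (c := fun k => (t k)⁻¹) hd
    (.of_forall fun _ => mem_univ _)
    (by simpa [smul_smul, inv_mul_cancel₀ (ht0 _).ne'] using hw')
  have hx : Tendsto (fun k => x + t k • w' k) atTop (𝓝 x) := by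
    simpa using tendsto_const_nhds.add hd
  have hzero : ∀ᶠ k in atTop, (0 : F) = (t k)⁻¹ • (Φ (x + t k • w' k) - Φ x) := by
    filter_upwards [hx.eventually hC] with k hk
    rw [hk (hmem k), sub_self, smul_zero]
  exact tendsto_nhds_unique hlim (tendsto_const_nhds.congr' hzero)

theorem ker_subset_tanCone [CompleteSpace E] [FiniteDimensional ℝ F]
    (hΦ : HasStrictFDerivAt Φ A x) (hA : Function.Surjective A)
    (hC : ∀ᶠ y in 𝓝 x, Φ y = Φ x → y ∈ C) : (A.ker : Set E) ⊆ tanCone C x := by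
  intro w hw
  have hA' : A.range = ⊤ := LinearMap.range_eq_top.mpr hA
  let γ : ℝ → E := fun τ => hΦ.implicitFunction Φ A hA' (Φ x) (τ • ⟨w, hw⟩)
  have hγ0 : γ 0 = x := by
    simp only [γ, zero_smul]
    exact hΦ.implicitFunction_apply_image hA'
  have hγ : HasDerivAt γ w 0 :=
    (hΦ.to_implicitFunction hA').hasFDerivAt.comp_hasDerivAt_of_eq (0 : ℝ)
      ((hasDerivAt_id (0 : ℝ)).smul_const (⟨w, hw⟩ : A.ker)) (zero_smul ℝ _).symm
      |>.congr_deriv (by simp)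
  have hlevel : ∀ᶠ τ in 𝓝 (0 : ℝ), Φ (γ τ) = Φ x := by
    have hT : Tendsto (fun τ : ℝ => (Φ x, τ • (⟨w, hw⟩ : A.ker))) (𝓝 0) (𝓝 (Φ x, 0)) :=
      tendsto_const_nhds.prodMk_nhds
        ((continuous_id.smul continuous_const).tendsto' 0 0 (zero_smul ℝ _))
    exact hT.eventually (hΦ.map_implicitFunction_eq hA')
  have hnear : Tendsto γ (𝓝 0) (𝓝 x) := hγ0 ▸ hγ.continuousAt.tendsto
  have hmem := mem_tanCone_of_hasDerivWithinAt hγ.hasDerivWithinAt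
    (nhdsWithin_le_nhds ((hlevel.and (hnear.eventually hC)).mono fun τ h => h.2 h.1))
  rwa [hγ0] at hmem

end Kernel

namespace IsSmoothMfdChart

variable {n c : ℕ} {X O : Set (Euc n)} {x₀ : Euc n} {Φ : Euc n → Euc c}
  {Φ' : Euc n → Euc n →L[ℝ] Euc c}

theorem eventually_tanCone_eq_ker (h : IsSmoothMfdChart X x₀ O Φ Φ') :
    ∀ᶠ x in 𝓝 x₀, x ∈ X → tanCone X x = (Φ' x).ker := by
  obtain ⟨hO, hx₀, hXO, hΦ, hΦ', hsurj⟩ := h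
  have hsurj_near : ∀ᶠ x in 𝓝 x₀, Function.Surjective (Φ' x) :=
    (hΦ'.continuousAt (hO.mem_nhds hx₀)).preimage_mem_nhds
      (ContinuousLinearMap.isOpen_setOf_surjective.mem_nhds hsurj)
  have hzero : ∀ y ∈ O, y ∈ X ↔ Φ y = 0 := fun y hy => by
    simpa [hy] using congrArg (y ∈ ·) hXO
  filter_upwards [hO.mem_nhds hx₀, hsurj_near] with x hxO hxsurj hxX
  have hlevel : ∀ᶠ y in 𝓝 x, y ∈ X ↔ Φ y = Φ x := by
    filter_upwards [hO.mem_nhds hxO] with y hy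
    rw [hzero y hy, (hzero x hxO).mp hxX]
  have hstrict : HasStrictFDerivAt Φ (Φ' x) x :=
    hasStrictFDerivAt_of_hasFDerivAt_of_continuousAt
      (eventually_of_mem (hO.mem_nhds hxO) hΦ) (hΦ'.continuousAt (hO.mem_nhds hxO))
  exact (tanCone_subset_ker (hΦ x hxO) (hlevel.mono fun _ hy => hy.mp)).antisymm
    (ker_subset_tanCone hstrict hxsurj (hlevel.mono fun _ hy => hy.mpr))

theorem mem_tanCone_of_tendsto (h : IsSmoothMfdChart X x₀ O Φ Φ') (hx₀ : x₀ ∈ X)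
    {xk wk : ℕ → Euc n} {w : Euc n} (hxk : Tendsto xk atTop (𝓝 x₀)) (hX : ∀ k, xk k ∈ X)
    (hwk : ∀ k, wk k ∈ tanCone X (xk k)) (hw : Tendsto wk atTop (𝓝 w)) :
    w ∈ tanCone X x₀ := by
  have hker := h.eventually_tanCone_eq_ker
  rw [hker.self_of_nhds hx₀, SetLike.mem_coe, LinearMap.mem_ker]
  obtain ⟨hO, hx₀O, -, -, hΦ', -⟩ := h
  have hlim : Tendsto (fun k => Φ' (xk k) (wk k)) atTop (𝓝 (Φ' x₀ w)) :=
    (isBoundedBilinearMap_apply.continuous.tendsto _).comp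
      (((hΦ'.continuousAt (hO.mem_nhds hx₀O)).tendsto.comp hxk).prodMk_nhds hw)
  refine tendsto_nhds_unique hlim (tendsto_const_nhds.congr' ?_)
  filter_upwards [hxk.eventually hker] with k hk
  have hwk := hwk k
  rw [hk (hX k), SetLike.mem_coe, LinearMap.mem_ker] at hwk
  exact hwk.symm

end IsSmoothMfdChart

theorem self_mem_projSet [NormedAddCommGroup E] {C : Set E} {x : E} (hx : x ∈ C) :
    x ∈ projSet C x :=
  ⟨hx, by rw [sub_self, norm_zero, infDist_zero_of_mem hx]⟩

theorem inner_sub_eq_zero_of_mem_projSet [NormedAddCommGroup E] [InnerProductSpace ℝ E]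
    {K : Submodule ℝ E} {v t s : E} (ht : t ∈ projSet K v) (hs : s ∈ K) :
    inner ℝ (v - t) s = 0 := by
  refine (K.norm_eq_iInf_iff_real_inner_eq_zero ht.1).mp ?_ s hs
  rw [ht.2, infDist_eq_iInf]
  simp only [dist_eq_norm]

section ProjCoderiv

variable [NormedAddCommGroup E] [InnerProductSpace ℝ E] [NormedAddCommGroup F]
  [InnerProductSpace ℝ F] {S : E → Set F} {X : Set E}

/-- Graph convexity makes `z'.1 - z.1` tangent to `X`, and projecting onto a tangent *subspace*
does not change the pairing with tangent directions. -/
theorem projNormal_subset_convexNormal (hcvx : Convex ℝ (gph (restr S X))) {z : E × F}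
    (hz : z ∈ gph (restr S X)) {K : Submodule ℝ E} (hK : tanCone X z.1 = K) :
    projNormal S X z ⊆ convexNormal (gph (restr S X)) z := by
  rintro q ⟨v, hv, hq⟩ z' hz'
  have hd : z'.1 - z.1 ∈ K := by
    rw [← SetLike.mem_coe, ← hK]
    exact sub_mem_tanCone_of_forall_add_smul_mem fun τ hτ =>
      (hcvx.add_smul_sub_mem hz hz' hτ).2
  have horth := inner_sub_eq_zero_of_mem_projSet (hK ▸ hq) hd
  have hvN := lNormal2_subset_convexNormal hcvx hv z' hz'
  rw [inner_sub_left] at horth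
  dsimp only at hvN
  linarith

theorem IsSmoothMfdChart.projCoderiv_eq_of_convex {n c : ℕ} {S : Euc n → Set F}
    {X O : Set (Euc n)} {xb : Euc n} {ub : F} {Φ : Euc n → Euc c}
    {Φ' : Euc n → Euc n →L[ℝ] Euc c} (hchart : IsSmoothMfdChart X xb O Φ Φ')
    (hcvx : Convex ℝ (gph (restr S X))) (hmem : (xb, ub) ∈ gph (restr S X)) (y : F) :
    projCoderiv S X xb ub y =
      {t | t ∈ tanCone X xb ∧ (t, -y) ∈ convexNormal (gph (restr S X)) (xb, ub)} := by
  ext t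
  constructor
  · rintro ⟨zk, qk, hzk, hqk, hzlim, hqlim⟩
    have hxk : Tendsto (fun k => (zk k).1) atTop (𝓝 xb) := (continuous_fst.tendsto _).comp hzlim
    have hqtan : ∀ k, (qk k).1 ∈ tanCone X (zk k).1 := fun k =>
      let ⟨_, _, hproj⟩ := hqk k
      hproj.1
    refine ⟨hchart.mem_tanCone_of_tendsto hmem.2 hxk (fun k => (hzk k).2) hqtan
      ((continuous_fst.tendsto _).comp hqlim),
      mem_convexNormal_of_tendsto hzlim hqlim ?_⟩
    filter_upwards [hxk.eventually hchart.eventually_tanCone_eq_ker] with k hk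
    exact projNormal_subset_convexNormal hcvx (hzk k) (hk (hzk k).2) (hqk k)
  · rintro ⟨ht, hN⟩
    exact ⟨fun _ => (xb, ub), fun _ => (t, -y), fun _ => hmem,
      fun _ => ⟨t, convexNormal_subset_lNormal2 hmem hN, self_mem_projSet ht⟩,
      tendsto_const_nhds, tendsto_const_nhds⟩

end ProjCoderiv

section LinearComposition

variable {P G : Type*}

theorem gph_restr_scomp_linear [AddCommGroup E] [Module ℝ E] [AddCommGroup P] [Module ℝ P]
    [AddCommGroup G] [Module ℝ G] (S₀ : E → Set P) (L : P →ₗ[ℝ] G) (X : Set E) :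
    gph (restr (scomp (fun w => {L w}) S₀) X) = LinearMap.id.prodMap L '' gph (restr S₀ X) := by
  ext ⟨x, u⟩
  simp only [gph, restr, scomp, mem_singleton_iff, mem_image, Prod.exists, LinearMap.prodMap_apply,
    LinearMap.id_apply, Prod.mk.injEq]
  aesop

theorem mem_convexNormal_image_prodMap_iff [NormedAddCommGroup E] [InnerProductSpace ℝ E]
    [NormedAddCommGroup P] [InnerProductSpace ℝ P] [CompleteSpace P]
    [NormedAddCommGroup G] [InnerProductSpace ℝ G] [CompleteSpace G]
    {D : Set (E × P)} {L : P →L[ℝ] G} {x t : E} {w : P} {y : G} :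
    (t, y) ∈ convexNormal (LinearMap.id.prodMap (L : P →ₗ[ℝ] G) '' D) (x, L w) ↔
      (t, L.adjoint y) ∈ convexNormal D (x, w) := by
  simp only [convexNormal, Set.forall_mem_image]
  simp [ContinuousLinearMap.adjoint_inner_left, map_sub]

end LinearComposition

theorem stmt17_general {n p m : ℕ} (S₀ : Euc n → Set (Euc p)) (L : Euc p →L[ℝ] Euc m)
    (X : Set (Euc n)) (xb : Euc n) (ub : Euc m)
    (hX : SmoothManifoldAround X xb)
    (hcvx : Convex ℝ (gph (restr S₀ X)))
    (hmem : (xb, ub) ∈ gph (restr (scomp (fun w => {L w}) S₀) X)) :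
    ∀ wb : Euc p, wb ∈ S₀ xb → L wb = ub →
      ∀ y : Euc m, projCoderiv (scomp (fun w => {L w}) S₀) X xb ub y =
        projCoderiv S₀ X xb wb (ContinuousLinearMap.adjoint L y) := by
  rintro wb hwb rfl y
  obtain ⟨c, O, Φ, Φ', hchart⟩ := hX
  have hgph : gph (restr (scomp (fun w => {L w}) S₀) X) =
      LinearMap.id.prodMap (L : Euc p →ₗ[ℝ] Euc m) '' gph (restr S₀ X) :=
    gph_restr_scomp_linear S₀ (L : Euc p →ₗ[ℝ] Euc m) X
  have hcvxL : Convex ℝ (gph (restr (scomp (fun w => {L w}) S₀) X)) :=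
    hgph ▸ hcvx.linear_image _
  rw [hchart.projCoderiv_eq_of_convex hcvxL hmem,
    hchart.projCoderiv_eq_of_convex hcvx ⟨hwb, hmem.2⟩, ← map_neg]
  ext t
  rw [mem_ofPred_eq, mem_ofPred_eq, ← mem_convexNormal_image_prodMap_iff, ← hgph]

/-- Outer composition with a linear map: for `S = F∘S₀` with
`F` linear, `S₀|_X` graph-convex and osc relative to the smooth manifold `X`,
and local boundedness of `(x,u) ↦ S₀|_X(x) ∩ F⁻¹(u)`, one has
`D*_X S(xb|ub)(y) = D*_X S₀(xb|wb)(F* y)` for `wb ∈ S₀(xb) ∩ F⁻¹(ub)`. -/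
theorem stmt17 {n p m : ℕ} (S₀ : Euc n → Set (Euc p)) (L : Euc p →L[ℝ] Euc m)
    (X : Set (Euc n)) (hXcl : IsClosed X) (xb : Euc n) (ub : Euc m)
    (hX : SmoothManifoldAround X xb)
    (h₀osc : OscRel S₀ X) (hcvx : Convex ℝ (gph (restr S₀ X)))
    (hmem : (xb, ub) ∈ gph (restr (scomp (fun w => {L w}) S₀) X))
    (hbdd : ∃ δ > 0, ∃ R : ℝ, ∀ x ∈ X, ∀ u : Euc m, ‖x - xb‖ < δ → ‖u - ub‖ < δ →
      ∀ w : Euc p, w ∈ S₀ x → L w = u → ‖w‖ ≤ R) :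
    ∀ wb : Euc p, wb ∈ S₀ xb → L wb = ub →
      ∀ y : Euc m, projCoderiv (scomp (fun w => {L w}) S₀) X xb ub y =
        projCoderiv S₀ X xb wb (ContinuousLinearMap.adjoint L y) :=
  stmt17_general S₀ L X xb ub hX hcvx hmem
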